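/- arXiv:1606.05279 — 7 statements merged into one kernel-verified Lean document; each statement's English description precedes it below -/
import Mathlib

section
/- Let p be a general assignment mechanism, let Ŷ(z) be linear estimators of Ȳ(z) that are unbiased for every choice of potential outcomes, let g be a contrast coefficient function and τ̂ = Σ_z g(z)Ŷ(z). Suppose the constants M, M_i(z), together with M_{ii}(z) = g(z)²B_{ii}(z,z) and M_{ii*}(z,z*) = g(z)g(z*)B_{ii*}(z,z*), satisfy the variance representation of Theorem 1 for every choice of potential outcomes. For any Q = (q_{ii*}) ∈ ℚ, define M̃_{ii*}(z,z*) = g(z) g(z*) ( B_{ii*}(z,z*) + q_{ii*} − 1/N² ) for i ≠ i*, and V_Q(τ̂) = M + Σ_{z∈Z} Σ_{i=1}^N ( M_i(z) Y_i(z) + M_{ii}(z) Y_i(z)² ) + Σ_{z∈Z} Σ_{z*∈Z} Σ_{i=1}^N Σ_{i*≠i} M̃_{ii*}(z,z*) Y_i(z) Y_{i*}(z*). Then: (1) Var(τ̂) = V_Q(τ̂) − τ′Qτ, where τ = (τ_1,…,τ_N)′ is the vector of unit-level contrasts; and (2) Var(τ̂) ≤ V_Q(τ̂). -/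
open Finset

/-- Expectation of a statistic `f` under a general assignment mechanism `p`. -/
def expect {N : ℕ} {Z : Type*} [Fintype Z] (p : (Fin N → Z) → ℝ)
    (f : (Fin N → Z) → ℝ) : ℝ :=
  ∑ w : Fin N → Z, p w * f w

/-- Variance of a statistic `f` under a general assignment mechanism `p`. -/
def variance {N : ℕ} {Z : Type*} [Fintype Z] (p : (Fin N → Z) → ℝ)
    (f : (Fin N → Z) → ℝ) : ℝ :=
  expect p (fun w => (f w - expect p f) ^ 2)

/-- A linear estimator of the treatment mean `Ȳ(z)`. -/
def linEst {N : ℕ} {Z : Type*} [Fintype Z] [DecidableEq Z]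
    (a : (Fin N → Z) → Z → ℝ) (b : (Fin N → Z) → Z → Fin N → ℝ)
    (Y : Fin N → Z → ℝ) (z : Z) (w : Fin N → Z) : ℝ :=
  a w z + ∑ i ∈ univ.filter (fun i => w i = z), b w z i * Y i z

/-- `B_{ii*}(z,z*) = ∑_{w : w(i)=z, w(i*)=z*} p(w) b_i(w,z) b_{i*}(w,z*)`. -/
def Bcoef {N : ℕ} {Z : Type*} [Fintype Z] [DecidableEq Z]
    (p : (Fin N → Z) → ℝ) (b : (Fin N → Z) → Z → Fin N → ℝ)
    (i iStar : Fin N) (z zStar : Z) : ℝ :=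
  ∑ w ∈ univ.filter (fun w : Fin N → Z => w i = z ∧ w iStar = zStar),
    p w * (b w z i * b w zStar iStar)

/-- The quantity `V_Q(τ̂)`, obtained from the variance representation of
Theorem 1 by replacing `M_{ii*}(z,z*)` with
`M̃_{ii*}(z,z*) = g(z)g(z*)(B_{ii*}(z,z*) + q_{ii*} − 1/N²)` and dropping `τ̄²`. -/
noncomputable def VQ {N : ℕ} {Z : Type*} [Fintype Z] [DecidableEq Z]
    (p : (Fin N → Z) → ℝ) (b : (Fin N → Z) → Z → Fin N → ℝ)
    (g : Z → ℝ) (M : ℝ) (Mi : Fin N → Z → ℝ)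
    (Q : Matrix (Fin N) (Fin N) ℝ) (Y : Fin N → Z → ℝ) : ℝ :=
  M + ∑ z, ∑ i, (Mi i z * Y i z + (g z) ^ 2 * Bcoef p b i i z z * (Y i z) ^ 2)
    + ∑ z, ∑ zStar, ∑ i, ∑ iStar ∈ univ.erase i,
        g z * g zStar * (Bcoef p b i iStar z zStar + Q i iStar - 1 / (N : ℝ) ^ 2)
          * (Y i z * Y iStar zStar)

/-!
Theorem 1 already writes `Var(τ̂)` as `V_Q(τ̂)` minus two corrections: the off-diagonal part
`∑_{i ≠ i*} (q_{ii*} − 1/N²) τ_i τ_{i*}` of a quadratic form, and `τ̄² = (∑ τ_i)² / N²`.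
Because `q_{ii} = 1/N²`, the two add up to exactly `τ′Qτ`, which is nonnegative since `Q`
is positive semidefinite.
-/

open Finset Matrix

section QuadraticForms

variable {ι : Type*} [Fintype ι]

lemma sum_sum_mul_mul_nonneg_of_posSemidef {A : Matrix ι ι ℝ} (hA : A.PosSemidef)
    (T : ι → ℝ) : 0 ≤ ∑ i, ∑ j, A i j * T i * T j := by
  calc 0 ≤ star T ⬝ᵥ A *ᵥ T := hA.dotProduct_mulVec_nonneg T
    _ = ∑ i, ∑ j, A i j * T i * T j := by
        simp only [star_trivial, dotProduct, mulVec, mul_sum]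
        exact sum_congr rfl fun i _ => sum_congr rfl fun j _ => by ring

variable [DecidableEq ι]

lemma sum_sum_mul_mul_eq_diag_add_offDiag (A : ι → ι → ℝ) (T : ι → ℝ) :
    ∑ i, ∑ j, A i j * T i * T j
      = ∑ i, A i i * T i ^ 2 + ∑ i, ∑ j ∈ univ.erase i, A i j * (T i * T j) := by
  rw [← sum_add_distrib]
  refine sum_congr rfl fun i _ => ?_
  rw [← add_sum_erase _ _ (mem_univ i)]
  congr 1
  · ring
  · exact sum_congr rfl fun j _ => by ring

lemma sum_sum_mul_mul_sub_mul_sq_sum (A : ι → ι → ℝ) (c : ℝ) (hdiag : ∀ i, A i i = c)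
    (T : ι → ℝ) :
    ∑ i, ∑ j, A i j * T i * T j - c * (∑ i, T i) ^ 2
      = ∑ i, ∑ j ∈ univ.erase i, (A i j - c) * (T i * T j) := by
  have hsq : c * (∑ i, T i) ^ 2 = ∑ i, ∑ j, c * T i * T j := by
    rw [sq, sum_mul_sum, mul_sum]
    exact sum_congr rfl fun i _ => by rw [mul_sum]; exact sum_congr rfl fun j _ => by ring
  rw [hsq, ← sum_sub_distrib]
  simp_rw [← sum_sub_distrib, ← sub_mul]
  rw [sum_sum_mul_mul_eq_diag_add_offDiag]
  simp [hdiag]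

end QuadraticForms

section Contrasts

variable {N : ℕ} {Z : Type*} [Fintype Z]

lemma sum_mul_sum_mul_offDiag_eq (g : Z → ℝ) (Y : Fin N → Z → ℝ) (c : Fin N → Fin N → ℝ) :
    ∑ z, ∑ zStar, ∑ i, ∑ iStar ∈ univ.erase i,
        g z * g zStar * c i iStar * (Y i z * Y iStar zStar)
      = ∑ i, ∑ iStar ∈ univ.erase i,
          c i iStar * ((∑ z, g z * Y i z) * (∑ z, g z * Y iStar z)) := by
  simp_rw [sum_mul_sum, mul_sum]
  conv_lhs => enter [2, z]; rw [sum_comm]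
  rw [sum_comm]
  refine sum_congr rfl fun i _ => ?_
  conv_lhs => enter [2, z]; rw [sum_comm]
  rw [sum_comm]
  exact sum_congr rfl fun j _ => sum_congr rfl fun z _ => sum_congr rfl fun z' _ => by ring

lemma sum_mul_mean_eq_mean_contrast (g : Z → ℝ) (Y : Fin N → Z → ℝ) :
    ∑ z, g z * ((∑ i, Y i z) / N) = (∑ i, ∑ z, g z * Y i z) / N := by
  simp_rw [mul_div_assoc', mul_sum, sum_div]
  exact sum_comm

lemma VQ_eq_add_offDiag [DecidableEq Z] (p : (Fin N → Z) → ℝ)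
    (b : (Fin N → Z) → Z → Fin N → ℝ) (g : Z → ℝ) (M : ℝ) (Mi : Fin N → Z → ℝ)
    (Q : Matrix (Fin N) (Fin N) ℝ) (Y : Fin N → Z → ℝ) :
    VQ p b g M Mi Q Y
      = M + ∑ z, ∑ i, (Mi i z * Y i z + (g z) ^ 2 * Bcoef p b i i z z * (Y i z) ^ 2)
          + ∑ z, ∑ zStar, ∑ i, ∑ iStar ∈ univ.erase i,
              g z * g zStar * Bcoef p b i iStar z zStar * (Y i z * Y iStar zStar)
          + ∑ i, ∑ iStar ∈ univ.erase i, (Q i iStar - 1 / (N : ℝ) ^ 2)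
              * ((∑ z, g z * Y i z) * (∑ z, g z * Y iStar z)) := by
  rw [VQ, ← sum_mul_sum_mul_offDiag_eq g Y (fun i iStar => Q i iStar - 1 / (N : ℝ) ^ 2)]
  simp only [add_sub_assoc, mul_add, add_mul, sum_add_distrib, add_assoc]

end Contrasts

theorem theorem2_parts1and2_general {N : ℕ} {Z : Type*} [Fintype Z] [DecidableEq Z]
    (p : (Fin N → Z) → ℝ)
    (a : (Fin N → Z) → Z → ℝ) (b : (Fin N → Z) → Z → Fin N → ℝ)
    (g : Z → ℝ)
    (M : ℝ) (Mi : Fin N → Z → ℝ)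
    (hrep : ∀ Y : Fin N → Z → ℝ,
      variance p (fun w => ∑ z, g z * linEst a b Y z w) =
        M + ∑ z, ∑ i, (Mi i z * Y i z + (g z) ^ 2 * Bcoef p b i i z z * (Y i z) ^ 2)
          + ∑ z, ∑ zStar, ∑ i, ∑ iStar ∈ univ.erase i,
              g z * g zStar * Bcoef p b i iStar z zStar * (Y i z * Y iStar zStar)
          - (∑ z, g z * ((∑ i, Y i z) / N)) ^ 2)
    (Q : Matrix (Fin N) (Fin N) ℝ) (hQ : Q.PosSemidef)
    (hdiag : ∀ i, Q i i = 1 / (N : ℝ) ^ 2) :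
    ∀ Y : Fin N → Z → ℝ,
      variance p (fun w => ∑ z, g z * linEst a b Y z w) =
        VQ p b g M Mi Q Y
          - ∑ i, ∑ iStar, Q i iStar * (∑ z, g z * Y i z) * (∑ z, g z * Y iStar z) ∧
      variance p (fun w => ∑ z, g z * linEst a b Y z w) ≤ VQ p b g M Mi Q Y := by
  intro Y
  have hτ := sum_sum_mul_mul_sub_mul_sq_sum Q _ hdiag (fun i => ∑ z, g z * Y i z)
  have hmean : (∑ z, g z * ((∑ i, Y i z) / N)) ^ 2
      = 1 / (N : ℝ) ^ 2 * (∑ i, ∑ z, g z * Y i z) ^ 2 := by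
    rw [sum_mul_mean_eq_mean_contrast, div_pow, one_div_mul_eq_div]
  have hvar : variance p (fun w => ∑ z, g z * linEst a b Y z w) =
      VQ p b g M Mi Q Y
        - ∑ i, ∑ iStar, Q i iStar * (∑ z, g z * Y i z) * (∑ z, g z * Y iStar z) := by
    rw [hrep Y, VQ_eq_add_offDiag, hmean]
    linarith
  have hτQτ := sum_sum_mul_mul_nonneg_of_posSemidef hQ (fun i => ∑ z, g z * Y i z)
  exact ⟨hvar, by linarith⟩

/-- Theorem 2, parts (1) and (2): under a general assignment mechanism with
unbiased linear estimators and constants `M`, `M_i(z)` realizing the variance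
representation of Theorem 1, for any symmetric psd matrix `Q` with zero row
sums and diagonal entries `1/N²`:
(1) `Var(τ̂) = V_Q(τ̂) − τ′Qτ`, where `τ` is the vector of unit-level contrasts;
(2) `Var(τ̂) ≤ V_Q(τ̂)`. -/
theorem theorem2_parts1and2 {N : ℕ} {Z : Type*} [Fintype Z] [DecidableEq Z]
    (hN : 2 ≤ N) (hZ : 2 ≤ Fintype.card Z)
    (p : (Fin N → Z) → ℝ) (hp0 : ∀ w, 0 ≤ p w) (hp1 : ∑ w : Fin N → Z, p w = 1)
    (a : (Fin N → Z) → Z → ℝ) (b : (Fin N → Z) → Z → Fin N → ℝ)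
    (hunb : ∀ (Y : Fin N → Z → ℝ) (z : Z),
      expect p (linEst a b Y z) = (∑ i, Y i z) / N)
    (g : Z → ℝ) (hgne : g ≠ 0) (hg0 : ∑ z, g z = 0)
    (M : ℝ) (Mi : Fin N → Z → ℝ)
    (hrep : ∀ Y : Fin N → Z → ℝ,
      variance p (fun w => ∑ z, g z * linEst a b Y z w) =
        M + ∑ z, ∑ i, (Mi i z * Y i z + (g z) ^ 2 * Bcoef p b i i z z * (Y i z) ^ 2)
          + ∑ z, ∑ zStar, ∑ i, ∑ iStar ∈ univ.erase i,
              g z * g zStar * Bcoef p b i iStar z zStar * (Y i z * Y iStar zStar)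
          - (∑ z, g z * ((∑ i, Y i z) / N)) ^ 2)
    (Q : Matrix (Fin N) (Fin N) ℝ) (hQ : Q.PosSemidef)
    (hrow : ∀ i, ∑ j, Q i j = 0) (hdiag : ∀ i, Q i i = 1 / (N : ℝ) ^ 2) :
    ∀ Y : Fin N → Z → ℝ,
      variance p (fun w => ∑ z, g z * linEst a b Y z w) =
        VQ p b g M Mi Q Y
          - ∑ i, ∑ iStar, Q i iStar * (∑ z, g z * Y i z) * (∑ z, g z * Y iStar z) ∧
      variance p (fun w => ∑ z, g z * linEst a b Y z w) ≤ VQ p b g M Mi Q Y :=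
  theorem2_parts1and2_general p a b g M Mi hrep Q hQ hdiag
end

section
/- Let Q be an N×N real symmetric positive semidefinite matrix and, for each z in a finite set Z, let Y(z) ∈ ℝ^N. Then the following are equivalent: (i) for every function g : Z → ℝ with Σ_{z∈Z} g(z) = 0, the vector τ_g = Σ_{z∈Z} g(z) Y(z) satisfies τ_g′ Q τ_g = 0; (ii) Q ( Y(z) − Y(z*) ) = 0 for all z, z* ∈ Z. (In the setting of Theorem 2, this says the upper bound V_Q(τ̂) on Var(τ̂) is attained for every treatment contrast if and only if the generalized additivity condition (ii) holds.) -/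
/-!
Write `τ_g = ∑ g(z) Y(z)`. Since `∑ g = 0`, `τ_g = ∑ g(z) (Y(z) − Y(z₀))` for any fixed `z₀`, so the
contrasts are exactly the linear combinations of the differences `Y(z) − Y(z*)` (each difference
being the contrast of `g = 𝟙_z − 𝟙_{z*}`). For positive semidefinite `Q`, `τ′Qτ = 0` iff `Qτ = 0`,
so (i) says that `Q` kills every contrast, which by linearity is (ii).
-/

open Finset Matrix

theorem Matrix.sum_sum_mul_mul_eq_dotProduct_mulVec {n R : Type*} [Fintype n] [CommSemiring R]
    (Q : Matrix n n R) (τ : n → R) :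
    ∑ i, ∑ j, Q i j * τ i * τ j = τ ⬝ᵥ Q *ᵥ τ := by
  simp only [dotProduct, mulVec, mul_sum]
  exact sum_congr rfl fun i _ => sum_congr rfl fun j _ => by ring

theorem LinearMap.forall_map_sum_smul_eq_zero_iff_forall_map_sub_eq_zero {R M P Z : Type*} [Ring R]
    [AddCommGroup M] [Module R M] [AddCommGroup P] [Module R P] [Fintype Z]
    (f : M →ₗ[R] P) (Y : Z → M) :
    (∀ g : Z → R, ∑ z, g z = 0 → f (∑ z, g z • Y z) = 0) ↔ ∀ z z' : Z, f (Y z - Y z') = 0 := by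
  classical
  constructor
  · intro h z z'
    have hsum : ∑ w, (Pi.single z 1 - Pi.single z' 1 : Z → R) w = 0 := by simp
    simpa [sub_smul, sum_sub_distrib] using h _ hsum
  · intro h g hg
    rcases isEmpty_or_nonempty Z with hZ | ⟨⟨z₀⟩⟩
    · simp
    have hτ : ∑ z, g z • Y z = ∑ z, g z • (Y z - Y z₀) := by
      simp [smul_sub, sum_sub_distrib, ← sum_smul, hg]
    simp [hτ, h _ z₀]

/-- Theorem 2, part (3): for a real symmetric positive semidefinite matrix `Q`
and potential-outcome vectors `Y(z) ∈ ℝ^N`, `z ∈ Z`, the quadratic form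
`τ_g′ Q τ_g` vanishes for every contrast vector `τ_g = ∑_z g(z) Y(z)`
(with `∑_z g(z) = 0`) if and only if the generalized additivity condition
`Q(Y(z) − Y(z*)) = 0` holds for all `z, z* ∈ Z`. -/
theorem theorem2_part3 {N : ℕ} {Z : Type*} [Fintype Z]
    (Q : Matrix (Fin N) (Fin N) ℝ) (hQ : Q.PosSemidef)
    (Y : Z → Fin N → ℝ) :
    (∀ g : Z → ℝ, ∑ z, g z = 0 →
      ∑ i, ∑ j, Q i j * (∑ z, g z * Y z i) * (∑ z, g z * Y z j) = 0) ↔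
    (∀ z zStar : Z, Q.mulVec (Y z - Y zStar) = 0) := by
  have hquad : ∀ g : Z → ℝ,
      ∑ i, ∑ j, Q i j * (∑ z, g z * Y z i) * (∑ z, g z * Y z j) =
        (∑ z, g z • Y z) ⬝ᵥ Q *ᵥ (∑ z, g z • Y z) := fun g => by
    rw [← sum_sum_mul_mul_eq_dotProduct_mulVec]
    simp only [Finset.sum_apply, Pi.smul_apply, smul_eq_mul]
  have hpsd : ∀ τ : Fin N → ℝ, τ ⬝ᵥ Q *ᵥ τ = 0 ↔ Q *ᵥ τ = 0 :=
    hQ.dotProduct_mulVec_zero_iff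
  simp_rw [hquad, hpsd]
  exact Q.mulVecLin.forall_map_sum_smul_eq_zero_iff_forall_map_sub_eq_zero Y
end

section
/- Let p be a general assignment mechanism and, for each z ∈ Z, let Ŷ(z) be a linear estimator of Ȳ(z) that is unbiased for every choice of potential outcomes. Let g₁, g₂ be contrast coefficient functions, with contrast estimators τ̂_l = Σ_z g_l(z)Ŷ(z) and population contrasts τ̄_l = Σ_z g_l(z)Ȳ(z), l = 1, 2. Then there exist real numbers R and R_i(z) (i = 1,…,N, z ∈ Z), depending only on p, the coefficients a, b, and g₁, g₂ (and not on the potential outcomes), such that, setting R_{ii}(z) = g₁(z) g₂(z) B_{ii}(z,z) and R_{ii*}(z,z*) = g₁(z) g₂(z*) B_{ii*}(z,z*) for i ≠ i*, for every choice of potential outcomes: Cov(τ̂_1, τ̂_2) = R + Σ_{z∈Z} Σ_{i=1}^N ( R_i(z) Y_i(z) + R_{ii}(z) Y_i(z)² ) + Σ_{z∈Z} Σ_{z*∈Z} Σ_{i=1}^N Σ_{i*≠i} R_{ii*}(z,z*) Y_i(z) Y_{i*}(z*) − τ̄_1 τ̄_2. -/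
/-!
Each contrast estimator is affine in the potential outcomes: the coefficient of `Y i z` at the
assignment `w` is `g z * b w z i` if `w i = z` and `0` otherwise. Hence `E[τ̂₁ τ̂₂]` is a
quadratic polynomial in the outcomes whose coefficient of `Y i z * Y iStar zStar` is
`g₁ z * g₂ zStar * B_{i iStar}(z, zStar)`; for `i = iStar` only `z = zStar` survives, since a
unit receives a single treatment. Unbiasedness turns `E[τ̂₁] E[τ̂₂]` into `τ̄₁ τ̄₂`.
-/

open Finset

/-- Covariance of two statistics `f₁, f₂` under a general assignment mechanism `p`. -/
def covar {N : ℕ} {Z : Type*} [Fintype Z] (p : (Fin N → Z) → ℝ)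
    (f₁ f₂ : (Fin N → Z) → ℝ) : ℝ :=
  expect p (fun w => (f₁ w - expect p f₁) * (f₂ w - expect p f₂))

section Expectation

variable {N : ℕ} {Z : Type*} [Fintype Z] (p : (Fin N → Z) → ℝ)

lemma expect_add (f g : (Fin N → Z) → ℝ) :
    expect p (fun w => f w + g w) = expect p f + expect p g := by
  simp only [_root_.expect, mul_add, sum_add_distrib]

lemma expect_sum {ι : Type*} (s : Finset ι) (f : ι → (Fin N → Z) → ℝ) :
    expect p (fun w => ∑ j ∈ s, f j w) = ∑ j ∈ s, expect p (f j) := by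
  simp only [_root_.expect, mul_sum]
  exact sum_comm

lemma expect_mul_const (f : (Fin N → Z) → ℝ) (c : ℝ) :
    expect p (fun w => f w * c) = expect p f * c := by
  simp only [_root_.expect, sum_mul, mul_assoc]

lemma expect_const_mul (c : ℝ) (f : (Fin N → Z) → ℝ) :
    expect p (fun w => c * f w) = c * expect p f := by
  simp only [_root_.expect, mul_sum, mul_left_comm]

lemma covar_eq_expect_mul_sub (hp1 : ∑ w, p w = 1) (f₁ f₂ : (Fin N → Z) → ℝ) :
    covar p f₁ f₂ = expect p (fun w => f₁ w * f₂ w) - expect p f₁ * expect p f₂ := by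
  have hconst : expect p (fun _ => expect p f₁ * expect p f₂) = expect p f₁ * expect p f₂ := by
    rw [_root_.expect, ← sum_mul, hp1, one_mul]
  have hexpand : ∀ w, (f₁ w - expect p f₁) * (f₂ w - expect p f₂) =
      f₁ w * f₂ w + (-expect p f₂ * f₁ w + (-expect p f₁ * f₂ w + expect p f₁ * expect p f₂)) :=
    fun w => by ring
  simp only [covar, hexpand, expect_add, expect_const_mul, hconst]
  ring

end Expectation

lemma sum_sum_mul_sum_sum {ι κ : Type*} [Fintype ι] [Fintype κ] (c₁ c₂ : κ → ι → ℝ)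
    (Y : ι → κ → ℝ) :
    (∑ z, ∑ i, c₁ z i * Y i z) * (∑ z, ∑ i, c₂ z i * Y i z) =
      ∑ z, ∑ zStar, ∑ i, ∑ iStar, c₁ z i * c₂ zStar iStar * (Y i z * Y iStar zStar) := by
  simp only [sum_mul_sum]
  refine sum_congr rfl fun z _ => sum_congr rfl fun zStar _ => sum_congr rfl fun i _ =>
    sum_congr rfl fun iStar _ => mul_mul_mul_comm _ _ _ _

lemma sum_quadratic_eq_diag_add_offDiag {ι κ : Type*} [Fintype ι] [DecidableEq ι] [Fintype κ]
    (Q : ι → ι → κ → κ → ℝ) (hQ : ∀ i z zStar, z ≠ zStar → Q i i z zStar = 0) (Y : ι → κ → ℝ) :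
    ∑ z, ∑ zStar, ∑ i, ∑ iStar, Q i iStar z zStar * (Y i z * Y iStar zStar) =
      ∑ z, ∑ i, Q i i z z * Y i z ^ 2 +
        ∑ z, ∑ zStar, ∑ i, ∑ iStar ∈ univ.erase i, Q i iStar z zStar * (Y i z * Y iStar zStar) := by
  have hdiag : ∀ z, ∑ zStar, ∑ i, Q i i z zStar * (Y i z * Y i zStar) =
      ∑ i, Q i i z z * Y i z ^ 2 := by
    intro z
    rw [sum_comm]
    refine sum_congr rfl fun i _ => ?_
    rw [sum_eq_single z (fun zStar _ hne => by rw [hQ i z zStar hne.symm, zero_mul]) (by simp), sq]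
  simp only [← hdiag, ← sum_add_distrib]
  refine sum_congr rfl fun z _ => sum_congr rfl fun zStar _ => sum_congr rfl fun i _ => ?_
  exact (add_sum_erase _ _ (mem_univ i)).symm

lemma add_sum_sum_mul_add_sum_sum {ι κ : Type*} [Fintype ι] [Fintype κ] (A₁ A₂ : ℝ)
    (c₁ c₂ : κ → ι → ℝ) (Y : ι → κ → ℝ) :
    (A₁ + ∑ z, ∑ i, c₁ z i * Y i z) * (A₂ + ∑ z, ∑ i, c₂ z i * Y i z) =
      A₁ * A₂ + ∑ z, ∑ i, (c₁ z i * A₂ + A₁ * c₂ z i) * Y i z +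
        ∑ z, ∑ zStar, ∑ i, ∑ iStar, c₁ z i * c₂ zStar iStar * (Y i z * Y iStar zStar) := by
  rw [← sum_sum_mul_sum_sum]
  simp only [add_mul, mul_add, sum_add_distrib, sum_mul, mul_sum, mul_assoc, mul_comm A₂]
  ring

section LinearEstimator

variable {N : ℕ} {Z : Type*} [Fintype Z] [DecidableEq Z]

def contrastCoef (b : (Fin N → Z) → Z → Fin N → ℝ) (g : Z → ℝ) (w : Fin N → Z) (z : Z)
    (i : Fin N) : ℝ :=
  if w i = z then g z * b w z i else 0

lemma sum_mul_linEst (a : (Fin N → Z) → Z → ℝ) (b : (Fin N → Z) → Z → Fin N → ℝ)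
    (Y : Fin N → Z → ℝ) (g : Z → ℝ) (w : Fin N → Z) :
    ∑ z, g z * linEst a b Y z w =
      ∑ z, g z * a w z + ∑ z, ∑ i, contrastCoef b g w z i * Y i z := by
  simp only [linEst, contrastCoef, mul_add, sum_add_distrib, sum_filter, mul_sum, ite_mul,
    zero_mul, mul_ite, mul_zero, mul_assoc]

lemma expect_contrastCoef_mul (p : (Fin N → Z) → ℝ) (b : (Fin N → Z) → Z → Fin N → ℝ)
    (g₁ g₂ : Z → ℝ) (i iStar : Fin N) (z zStar : Z) :
    expect p (fun w => contrastCoef b g₁ w z i * contrastCoef b g₂ w zStar iStar) =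
      g₁ z * g₂ zStar * Bcoef p b i iStar z zStar := by
  rw [Bcoef, sum_filter, mul_sum, _root_.expect]
  refine sum_congr rfl fun w _ => ?_
  rw [contrastCoef, contrastCoef, ite_zero_mul_ite_zero, mul_ite, mul_ite, mul_zero, mul_zero]
  split_ifs <;> ring

lemma Bcoef_self_of_ne (p : (Fin N → Z) → ℝ) (b : (Fin N → Z) → Z → Fin N → ℝ) (i : Fin N)
    {z zStar : Z} (h : z ≠ zStar) : Bcoef p b i i z zStar = 0 :=
  sum_eq_zero fun _ hw => absurd ((mem_filter.1 hw).2.1.symm.trans (mem_filter.1 hw).2.2) h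

lemma expect_sum_mul_linEst {p : (Fin N → Z) → ℝ} {a : (Fin N → Z) → Z → ℝ}
    {b : (Fin N → Z) → Z → Fin N → ℝ}
    (hunb : ∀ (Y : Fin N → Z → ℝ) (z : Z), expect p (linEst a b Y z) = (∑ i, Y i z) / N)
    (Y : Fin N → Z → ℝ) (g : Z → ℝ) :
    expect p (fun w => ∑ z, g z * linEst a b Y z w) = ∑ z, g z * ((∑ i, Y i z) / N) := by
  simp only [expect_sum, expect_const_mul, hunb]

lemma expect_sum_mul_linEst_mul (p : (Fin N → Z) → ℝ) (a : (Fin N → Z) → Z → ℝ)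
    (b : (Fin N → Z) → Z → Fin N → ℝ) (Y : Fin N → Z → ℝ) (g₁ g₂ : Z → ℝ) :
    expect p (fun w => (∑ z, g₁ z * linEst a b Y z w) * (∑ z, g₂ z * linEst a b Y z w)) =
      expect p (fun w => (∑ z, g₁ z * a w z) * (∑ z, g₂ z * a w z)) +
        ∑ z, ∑ i, expect p (fun w => contrastCoef b g₁ w z i * (∑ z, g₂ z * a w z) +
          (∑ z, g₁ z * a w z) * contrastCoef b g₂ w z i) * Y i z +
        ∑ z, ∑ zStar, ∑ i, ∑ iStar,
          g₁ z * g₂ zStar * Bcoef p b i iStar z zStar * (Y i z * Y iStar zStar) := by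
  simp only [sum_mul_linEst, add_sum_sum_mul_add_sum_sum, expect_add, expect_sum,
    expect_mul_const, expect_contrastCoef_mul]

end LinearEstimator

theorem theorem3_general {N : ℕ} {Z : Type*} [Fintype Z] [DecidableEq Z]
    (p : (Fin N → Z) → ℝ) (hp1 : ∑ w : Fin N → Z, p w = 1)
    (a : (Fin N → Z) → Z → ℝ) (b : (Fin N → Z) → Z → Fin N → ℝ)
    (hunb : ∀ (Y : Fin N → Z → ℝ) (z : Z),
      expect p (linEst a b Y z) = (∑ i, Y i z) / N)
    (g₁ g₂ : Z → ℝ) :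
    ∃ R : ℝ, ∃ Ri : Fin N → Z → ℝ,
      ∀ Y : Fin N → Z → ℝ,
        covar p (fun w => ∑ z, g₁ z * linEst a b Y z w)
            (fun w => ∑ z, g₂ z * linEst a b Y z w) =
          R + ∑ z, ∑ i, (Ri i z * Y i z + g₁ z * g₂ z * Bcoef p b i i z z * (Y i z) ^ 2)
            + ∑ z, ∑ zStar, ∑ i, ∑ iStar ∈ univ.erase i,
                g₁ z * g₂ zStar * Bcoef p b i iStar z zStar * (Y i z * Y iStar zStar)
            - (∑ z, g₁ z * ((∑ i, Y i z) / N)) * (∑ z, g₂ z * ((∑ i, Y i z) / N)) := by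
  refine ⟨expect p (fun w => (∑ z, g₁ z * a w z) * (∑ z, g₂ z * a w z)),
    fun i z => expect p (fun w => contrastCoef b g₁ w z i * (∑ z, g₂ z * a w z) +
      (∑ z, g₁ z * a w z) * contrastCoef b g₂ w z i), fun Y => ?_⟩
  rw [covar_eq_expect_mul_sub p hp1, expect_sum_mul_linEst_mul, expect_sum_mul_linEst hunb,
    expect_sum_mul_linEst hunb, sum_quadratic_eq_diag_add_offDiag
      (fun i iStar z zStar => g₁ z * g₂ zStar * Bcoef p b i iStar z zStar)
      (fun i _ _ h => by rw [Bcoef_self_of_ne p b i h, mul_zero])]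
  simp only [sum_add_distrib]
  ring

/-- Theorem 3: under a general assignment mechanism with unbiased linear
estimators `Ŷ(z)` and two contrast estimators `τ̂_l = ∑_z g_l(z) Ŷ(z)`, there
exist constants `R`, `R_i(z)` not depending on the potential outcomes such
that, with `R_{ii}(z) = g₁(z)g₂(z) B_{ii}(z,z)` and
`R_{ii*}(z,z*) = g₁(z)g₂(z*) B_{ii*}(z,z*)`,
`Cov(τ̂₁, τ̂₂) = R + ∑_z ∑_i (R_i(z) Y_i(z) + R_{ii}(z) Y_i(z)²)
 + ∑_z ∑_{z*} ∑_i ∑_{i*≠i} R_{ii*}(z,z*) Y_i(z) Y_{i*}(z*) − τ̄₁ τ̄₂`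
for every choice of potential outcomes. -/
theorem theorem3 {N : ℕ} {Z : Type*} [Fintype Z] [DecidableEq Z]
    (hN : 2 ≤ N) (hZ : 2 ≤ Fintype.card Z)
    (p : (Fin N → Z) → ℝ) (hp0 : ∀ w, 0 ≤ p w) (hp1 : ∑ w : Fin N → Z, p w = 1)
    (a : (Fin N → Z) → Z → ℝ) (b : (Fin N → Z) → Z → Fin N → ℝ)
    (hunb : ∀ (Y : Fin N → Z → ℝ) (z : Z),
      expect p (linEst a b Y z) = (∑ i, Y i z) / N)
    (g₁ g₂ : Z → ℝ) (hg₁ne : g₁ ≠ 0) (hg₂ne : g₂ ≠ 0)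
    (hg₁0 : ∑ z, g₁ z = 0) (hg₂0 : ∑ z, g₂ z = 0) :
    ∃ R : ℝ, ∃ Ri : Fin N → Z → ℝ,
      ∀ Y : Fin N → Z → ℝ,
        covar p (fun w => ∑ z, g₁ z * linEst a b Y z w)
            (fun w => ∑ z, g₂ z * linEst a b Y z w) =
          R + ∑ z, ∑ i, (Ri i z * Y i z + g₁ z * g₂ z * Bcoef p b i i z z * (Y i z) ^ 2)
            + ∑ z, ∑ zStar, ∑ i, ∑ iStar ∈ univ.erase i,
                g₁ z * g₂ zStar * Bcoef p b i iStar z zStar * (Y i z * Y iStar zStar)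
            - (∑ z, g₁ z * ((∑ i, Y i z) / N)) * (∑ z, g₂ z * ((∑ i, Y i z) / N)) :=
  theorem3_general p hp1 a b hunb g₁ g₂
end

section
/- In the setting of Theorem 3 (a GAM p, unbiased linear estimators Ŷ(z), contrast coefficient functions g₁, g₂, and constants R, R_i(z), R_{ii}(z) = g₁(z)g₂(z)B_{ii}(z,z), R_{ii*}(z,z*) = g₁(z)g₂(z*)B_{ii*}(z,z*) for which the covariance representation of Theorem 3 holds for every choice of potential outcomes), let Q = (q_{ii*}) ∈ ℚ and define R̃_{ii*}(z,z*) = g₁(z) g₂(z*) ( B_{ii*}(z,z*) + q_{ii*} − 1/N² ) for i ≠ i*, and C_Q(τ̂_1, τ̂_2) = R + Σ_{z∈Z} Σ_{i=1}^N ( R_i(z) Y_i(z) + R_{ii}(z) Y_i(z)² ) + Σ_{z∈Z} Σ_{z*∈Z} Σ_{i=1}^N Σ_{i*≠i} R̃_{ii*}(z,z*) Y_i(z) Y_{i*}(z*). Then Cov(τ̂_1, τ̂_2) = C_Q(τ̂_1, τ̂_2) − τ_{[1]}′ Q τ_{[2]}, where τ_{[l]} ∈ ℝ^N has entries τ_{l,i}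 = Σ_z g_l(z) Y_i(z). In particular, if Q(Y(z) − Y(z*)) = 0 for all z, z* ∈ Z, then Cov(τ̂_1, τ̂_2) = C_Q(τ̂_1, τ̂_2). -/
/-!
Comparing `C_Q` with the representation of Theorem 3, the only new term is
`∑_{i ≠ i*} (q_{ii*} − 1/N²) τ_{1,i} τ_{2,i*}`. Since `q_{ii} = 1/N²`, the diagonal may be added
for free, giving `τ_[1]′ Q τ_[2] − (1/N²)(∑ τ_{1,i})(∑ τ_{2,i})`, and the last product is exactly
`τ̄₁ τ̄₂`. Under the additivity condition, `Q τ_[2] = ∑_z g₂(z) Q Y(z)` is `∑_z g₂(z)` times a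
vector independent of `z`, hence zero.
-/

open Finset

/-- The quantity `C_Q(τ̂₁, τ̂₂)`, obtained from the covariance representation of
Theorem 3 by replacing `R_{ii*}(z,z*)` with
`R̃_{ii*}(z,z*) = g₁(z)g₂(z*)(B_{ii*}(z,z*) + q_{ii*} − 1/N²)` and dropping
`τ̄₁τ̄₂`. -/
noncomputable def CQ {N : ℕ} {Z : Type*} [Fintype Z] [DecidableEq Z]
    (p : (Fin N → Z) → ℝ) (b : (Fin N → Z) → Z → Fin N → ℝ)
    (g₁ g₂ : Z → ℝ) (R : ℝ) (Ri : Fin N → Z → ℝ)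
    (Q : Matrix (Fin N) (Fin N) ℝ) (Y : Fin N → Z → ℝ) : ℝ :=
  R + ∑ z, ∑ i, (Ri i z * Y i z + g₁ z * g₂ z * Bcoef p b i i z z * (Y i z) ^ 2)
    + ∑ z, ∑ zStar, ∑ i, ∑ iStar ∈ univ.erase i,
        g₁ z * g₂ zStar * (Bcoef p b i iStar z zStar + Q i iStar - 1 / (N : ℝ) ^ 2)
          * (Y i z * Y iStar zStar)

section ContrastAlgebra

open Matrix

variable {ι Z : Type*} [Fintype ι] [Fintype Z]

lemma sum_sum_mul_mul_eq_dotProduct_mulVec (Q : Matrix ι ι ℝ) (u v : ι → ℝ) :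
    ∑ i, ∑ j, Q i j * u i * v j = u ⬝ᵥ Q *ᵥ v := by
  simp only [dotProduct, mulVec, mul_sum]
  exact sum_congr rfl fun i _ => sum_congr rfl fun j _ => by ring

lemma sum_offDiag_eq_sum_sub_of_diag_eq [DecidableEq ι] (Q : Matrix ι ι ℝ) {c : ℝ}
    (hdiag : ∀ i, Q i i = c) (u v : ι → ℝ) :
    ∑ i, ∑ j ∈ univ.erase i, (Q i j - c) * (u i * v j)
      = ∑ i, ∑ j, Q i j * u i * v j - c * ((∑ i, u i) * ∑ j, v j) := by
  have hfull : ∀ i, ∑ j ∈ univ.erase i, (Q i j - c) * (u i * v j)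
      = ∑ j, (Q i j - c) * (u i * v j) := fun i => by
    rw [sum_erase_eq_sub (mem_univ i), hdiag, sub_self, zero_mul, sub_zero]
  rw [sum_congr rfl fun i _ => hfull i, sum_mul_sum, mul_sum, ← sum_sub_distrib]
  refine sum_congr rfl fun i _ => ?_
  rw [mul_sum, ← sum_sub_distrib]
  exact sum_congr rfl fun j _ => by ring

lemma sum_treatment_pairs_eq_sum_mul_contrast (g₁ g₂ : Z → ℝ) (Y : ι → Z → ℝ)
    (s : ι → Finset ι) (d : ι → ι → ℝ) :
    ∑ z, ∑ z', ∑ i, ∑ j ∈ s i, g₁ z * g₂ z' * d i j * (Y i z * Y j z')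
      = ∑ i, ∑ j ∈ s i, d i j * ((∑ z, g₁ z * Y i z) * ∑ z', g₂ z' * Y j z') := by
  have hexpand : ∀ i j, d i j * ((∑ z, g₁ z * Y i z) * ∑ z', g₂ z' * Y j z')
      = ∑ z, ∑ z', g₁ z * g₂ z' * d i j * (Y i z * Y j z') := fun i j => by
    rw [sum_mul_sum, mul_sum]
    exact sum_congr rfl fun z _ => by rw [mul_sum]; exact sum_congr rfl fun z' _ => by ring
  simp only [hexpand]
  calc _ = ∑ z, ∑ i, ∑ z', ∑ j ∈ s i, g₁ z * g₂ z' * d i j * (Y i z * Y j z') :=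
        sum_congr rfl fun _ _ => sum_comm
    _ = ∑ i, ∑ z, ∑ j ∈ s i, ∑ z', g₁ z * g₂ z' * d i j * (Y i z * Y j z') := by
        rw [sum_comm]; exact sum_congr rfl fun _ _ => sum_congr rfl fun _ _ => sum_comm
    _ = _ := sum_congr rfl fun _ _ => sum_comm

lemma contrast_mean_eq_mean_contrast (g : Z → ℝ) (Y : ι → Z → ℝ) (n : ℝ) :
    ∑ z, g z * ((∑ i, Y i z) / n) = (∑ i, ∑ z, g z * Y i z) / n := by
  simp only [sum_div, mul_sum, mul_div_assoc]
  exact sum_comm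

lemma sum_smul_eq_zero_of_const {M : Type*} [AddCommGroup M] [Module ℝ M] {g : Z → ℝ}
    (hg : ∑ z, g z = 0) {v : Z → M} (hv : ∀ z z', v z = v z') : ∑ z, g z • v z = 0 := by
  rcases isEmpty_or_nonempty Z with hZ | ⟨⟨z₀⟩⟩
  · simp
  · simp only [hv _ z₀, ← sum_smul, hg, zero_smul]

lemma mulVec_contrast_eq_zero {Q : Matrix ι ι ℝ} {g : Z → ℝ} (hg : ∑ z, g z = 0)
    {Y : ι → Z → ℝ} (hadd : ∀ z z', Q *ᵥ (fun i => Y i z - Y i z') = 0) :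
    Q *ᵥ (fun i => ∑ z, g z * Y i z) = 0 := by
  have hτ : (fun i => ∑ z, g z * Y i z) = ∑ z, g z • fun i => Y i z := by
    ext i; simp
  rw [hτ, mulVec_sum]
  simp only [mulVec_smul]
  refine sum_smul_eq_zero_of_const hg fun z z' => ?_
  rw [← sub_eq_zero, ← mulVec_sub]
  exact hadd z z'

end ContrastAlgebra

lemma CQ_eq_add_sum_offDiag {N : ℕ} {Z : Type*} [Fintype Z] [DecidableEq Z]
    (p : (Fin N → Z) → ℝ) (b : (Fin N → Z) → Z → Fin N → ℝ)
    (g₁ g₂ : Z → ℝ) (R : ℝ) (Ri : Fin N → Z → ℝ)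
    (Q : Matrix (Fin N) (Fin N) ℝ) (Y : Fin N → Z → ℝ) :
    CQ p b g₁ g₂ R Ri Q Y =
      R + ∑ z, ∑ i, (Ri i z * Y i z + g₁ z * g₂ z * Bcoef p b i i z z * (Y i z) ^ 2)
        + ∑ z, ∑ zStar, ∑ i, ∑ iStar ∈ univ.erase i,
            g₁ z * g₂ zStar * Bcoef p b i iStar z zStar * (Y i z * Y iStar zStar)
        + ∑ i, ∑ iStar ∈ univ.erase i, (Q i iStar - 1 / (N : ℝ) ^ 2)
            * ((∑ z, g₁ z * Y i z) * ∑ z, g₂ z * Y iStar z) := by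
  have hsplit : ∀ z zStar i iStar, g₁ z * g₂ zStar
        * (Bcoef p b i iStar z zStar + Q i iStar - 1 / (N : ℝ) ^ 2) * (Y i z * Y iStar zStar)
      = g₁ z * g₂ zStar * Bcoef p b i iStar z zStar * (Y i z * Y iStar zStar)
        + g₁ z * g₂ zStar * (Q i iStar - 1 / (N : ℝ) ^ 2) * (Y i z * Y iStar zStar) := by
    intros; ring
  rw [CQ, ← sum_treatment_pairs_eq_sum_mul_contrast]
  simp only [hsplit, sum_add_distrib, add_assoc]

theorem covariance_decomposition_general {N : ℕ} {Z : Type*} [Fintype Z] [DecidableEq Z]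
    (p : (Fin N → Z) → ℝ)
    (a : (Fin N → Z) → Z → ℝ) (b : (Fin N → Z) → Z → Fin N → ℝ)
    (g₁ g₂ : Z → ℝ)
    (hg₂0 : ∑ z, g₂ z = 0)
    (R : ℝ) (Ri : Fin N → Z → ℝ)
    (hrep : ∀ Y : Fin N → Z → ℝ,
      covar p (fun w => ∑ z, g₁ z * linEst a b Y z w)
          (fun w => ∑ z, g₂ z * linEst a b Y z w) =
        R + ∑ z, ∑ i, (Ri i z * Y i z + g₁ z * g₂ z * Bcoef p b i i z z * (Y i z) ^ 2)
          + ∑ z, ∑ zStar, ∑ i, ∑ iStar ∈ univ.erase i,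
              g₁ z * g₂ zStar * Bcoef p b i iStar z zStar * (Y i z * Y iStar zStar)
          - (∑ z, g₁ z * ((∑ i, Y i z) / N)) * (∑ z, g₂ z * ((∑ i, Y i z) / N)))
    (Q : Matrix (Fin N) (Fin N) ℝ)
    (hdiag : ∀ i, Q i i = 1 / (N : ℝ) ^ 2) :
    ∀ Y : Fin N → Z → ℝ,
      covar p (fun w => ∑ z, g₁ z * linEst a b Y z w)
          (fun w => ∑ z, g₂ z * linEst a b Y z w) =
        CQ p b g₁ g₂ R Ri Q Y
          - ∑ i, ∑ iStar, Q i iStar * (∑ z, g₁ z * Y i z) * (∑ z, g₂ z * Y iStar z) ∧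
      ((∀ z zStar : Z, Q.mulVec (fun i => Y i z - Y i zStar) = 0) →
        covar p (fun w => ∑ z, g₁ z * linEst a b Y z w)
            (fun w => ∑ z, g₂ z * linEst a b Y z w) = CQ p b g₁ g₂ R Ri Q Y) := by
  intro Y
  have hcov : covar p (fun w => ∑ z, g₁ z * linEst a b Y z w)
      (fun w => ∑ z, g₂ z * linEst a b Y z w) = CQ p b g₁ g₂ R Ri Q Y
        - ∑ i, ∑ iStar, Q i iStar * (∑ z, g₁ z * Y i z) * (∑ z, g₂ z * Y iStar z) := by
    rw [hrep Y, CQ_eq_add_sum_offDiag, sum_offDiag_eq_sum_sub_of_diag_eq Q hdiag, contrast_mean_eq_mean_contrast,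
      contrast_mean_eq_mean_contrast]
    ring
  refine ⟨hcov, fun hadd => ?_⟩
  rw [hcov, sum_sum_mul_mul_eq_dotProduct_mulVec, mulVec_contrast_eq_zero hg₂0 hadd,
    dotProduct_zero, sub_zero]

/-- Covariance decomposition: in the setting of Theorem 3, for any symmetric
psd matrix `Q` with zero row sums and diagonal entries `1/N²`,
`Cov(τ̂₁, τ̂₂) = C_Q(τ̂₁, τ̂₂) − τ_{[1]}′ Q τ_{[2]}`; in particular, if the
generalized additivity condition `Q(Y(z) − Y(z*)) = 0` holds for all
`z, z* ∈ Z`, then `Cov(τ̂₁, τ̂₂) = C_Q(τ̂₁, τ̂₂)`. -/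
theorem covariance_decomposition {N : ℕ} {Z : Type*} [Fintype Z] [DecidableEq Z]
    (hN : 2 ≤ N) (hZ : 2 ≤ Fintype.card Z)
    (p : (Fin N → Z) → ℝ) (hp0 : ∀ w, 0 ≤ p w) (hp1 : ∑ w : Fin N → Z, p w = 1)
    (a : (Fin N → Z) → Z → ℝ) (b : (Fin N → Z) → Z → Fin N → ℝ)
    (hunb : ∀ (Y : Fin N → Z → ℝ) (z : Z),
      expect p (linEst a b Y z) = (∑ i, Y i z) / N)
    (g₁ g₂ : Z → ℝ) (hg₁ne : g₁ ≠ 0) (hg₂ne : g₂ ≠ 0)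
    (hg₁0 : ∑ z, g₁ z = 0) (hg₂0 : ∑ z, g₂ z = 0)
    (R : ℝ) (Ri : Fin N → Z → ℝ)
    (hrep : ∀ Y : Fin N → Z → ℝ,
      covar p (fun w => ∑ z, g₁ z * linEst a b Y z w)
          (fun w => ∑ z, g₂ z * linEst a b Y z w) =
        R + ∑ z, ∑ i, (Ri i z * Y i z + g₁ z * g₂ z * Bcoef p b i i z z * (Y i z) ^ 2)
          + ∑ z, ∑ zStar, ∑ i, ∑ iStar ∈ univ.erase i,
              g₁ z * g₂ zStar * Bcoef p b i iStar z zStar * (Y i z * Y iStar zStar)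
          - (∑ z, g₁ z * ((∑ i, Y i z) / N)) * (∑ z, g₂ z * ((∑ i, Y i z) / N)))
    (Q : Matrix (Fin N) (Fin N) ℝ) (hQ : Q.PosSemidef)
    (hrow : ∀ i, ∑ j, Q i j = 0) (hdiag : ∀ i, Q i i = 1 / (N : ℝ) ^ 2) :
    ∀ Y : Fin N → Z → ℝ,
      covar p (fun w => ∑ z, g₁ z * linEst a b Y z w)
          (fun w => ∑ z, g₂ z * linEst a b Y z w) =
        CQ p b g₁ g₂ R Ri Q Y
          - ∑ i, ∑ iStar, Q i iStar * (∑ z, g₁ z * Y i z) * (∑ z, g₂ z * Y iStar z) ∧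
      ((∀ z zStar : Z, Q.mulVec (fun i => Y i z - Y i zStar) = 0) →
        covar p (fun w => ∑ z, g₁ z * linEst a b Y z w)
            (fun w => ∑ z, g₂ z * linEst a b Y z w) = CQ p b g₁ g₂ R Ri Q Y) :=
  covariance_decomposition_general p a b g₁ g₂ hg₂0 R Ri hrep Q hdiag
end

section
/- (Proposition 2(a)) Let H ≥ 2 and N₀ ≥ 1 with N = H·N₀, and index the units so that the h-th block (whole-plot) is Ω_h = {(h−1)N₀+1, …, hN₀}; regard any N×N matrix as an H×H array of N₀×N₀ blocks. Let Q = (q_{ii*}) be an N×N real symmetric positive semidefinite matrix with all row sums zero and all diagonal entries 1/N². Then the following are equivalent: (i) q_{ii*} = 1/N² for all units i, i* lying in the same block Ω_h; (ii) Q = Q₁ ⊗ (𝟙₀𝟙₀′), where 𝟙₀ is the N₀×1 all-ones vector and Q₁ is an H×H real symmetric positive semidefinite matrix with all row sums zero and all diagonal entries equal to 1/N². (Condition (i) is the second-order assignment probability condition (SAP) specialized to the split-plot assignment mechanism.) -/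
open Finset Matrix

/-!
If the diagonal blocks of `Q` are constant, the quadratic form of `Q` vanishes at
`e_(h,j) - e_(h,j')`; for a positive semidefinite matrix this forces `Q (e_(h,j) - e_(h,j')) = 0`,
so the columns, and by symmetry the rows, of `Q` are constant within each block. Hence
`Q = Q₁ ⊗ 𝟙₀𝟙₀′` with `Q₁` a principal submatrix of `Q` (so positive semidefinite), and the
row sums of `Q` are `N₀` times those of `Q₁`.
-/

namespace Matrix

open scoped ComplexOrder

variable {𝕜 : Type*} [RCLike 𝕜]

theorem PosSemidef.apply_eq_of_diag_add_diag_eq {n : Type*} [Fintype n] {Q : Matrix n n 𝕜} (hQ : Q.PosSemidef) {a b : n} (hab : Q a a + Q b b = Q a b + Q b a)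
    (i : n) : Q i a = Q i b := by
  classical
  set x : n → 𝕜 := Pi.single a 1 - Pi.single b 1
  have hquad : star x ⬝ᵥ Q *ᵥ x = 0 := by
    simp only [x, star_sub, Pi.star_single, star_one, sub_dotProduct, mulVec_sub,
      dotProduct_sub, mulVec_single, single_dotProduct, one_mul, MulOpposite.op_one, one_smul,
      col_apply]
    linear_combination hab
  have := congrFun ((hQ.dotProduct_mulVec_zero_iff x).mp hquad) i
  simpa [x, mulVec_sub, mulVec_single, sub_eq_zero] using this

theorem PosSemidef.eq_kroneckerMap_submatrix_of_diagBlock_const {ι κ : Type*} [Fintype ι]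
    [Fintype κ] {Q : Matrix (ι × κ) (ι × κ) 𝕜}
    (hQ : Q.PosSemidef) {c : 𝕜} (hc : ∀ h j j', Q (h, j) (h, j') = c) (j₀ : κ) :
    Q = kroneckerMap (· * ·) (Q.submatrix (·, j₀) (·, j₀)) (of fun _ _ => 1) := by
  have hcol : ∀ i h j, Q i (h, j) = Q i (h, j₀) := fun i h j ↦
    hQ.apply_eq_of_diag_add_diag_eq (by rw [hc, hc, hc, hc]) i
  ext ⟨h, j⟩ ⟨h', j'⟩
  calc Q (h, j) (h', j') = Q (h, j) (h', j₀) := hcol _ _ _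
    _ = star (Q (h', j₀) (h, j)) := (hQ.isHermitian.apply _ _).symm
    _ = star (Q (h', j₀) (h, j₀)) := by rw [hcol]
    _ = Q (h, j₀) (h', j₀) * 1 := by rw [hQ.isHermitian.apply, mul_one]

theorem sum_kroneckerMap_of_one_apply {R ι κ : Type*} [NonAssocSemiring R] [Fintype ι]
    [Fintype κ] (A : Matrix ι ι R) (p : ι × κ) :
    ∑ q, kroneckerMap (· * ·) A (of fun (_ _ : κ) ↦ (1 : R)) p q =
      Fintype.card κ * ∑ h, A p.1 h := by
  simp [Fintype.sum_prod_type, Finset.mul_sum]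

end Matrix

theorem proposition2a_general {H N₀ N : ℕ} (hN₀ : 1 ≤ N₀)
    (Q : Matrix (Fin H × Fin N₀) (Fin H × Fin N₀) ℝ) (hQ : Q.PosSemidef)
    (hrow : ∀ i, ∑ j, Q i j = 0) (hdiag : ∀ i, Q i i = 1 / (N : ℝ) ^ 2) :
    (∀ (h : Fin H) (j j' : Fin N₀), Q (h, j) (h, j') = 1 / (N : ℝ) ^ 2) ↔
    (∃ Q₁ : Matrix (Fin H) (Fin H) ℝ, Q₁.PosSemidef ∧
      (∀ h, ∑ h', Q₁ h h' = 0) ∧ (∀ h, Q₁ h h = 1 / (N : ℝ) ^ 2) ∧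
      Q = Matrix.kroneckerMap (· * ·) Q₁ (Matrix.of fun _ _ => (1 : ℝ))) := by
  constructor
  · intro hsap
    let j₀ : Fin N₀ := ⟨0, hN₀⟩
    have hQ_eq := hQ.eq_kroneckerMap_submatrix_of_diagBlock_const hsap j₀
    refine ⟨Q.submatrix (·, j₀) (·, j₀), hQ.submatrix _, fun h ↦ ?_, fun h ↦ hdiag _, hQ_eq⟩
    have hrow₀ := hrow (h, j₀)
    rw [hQ_eq, sum_kroneckerMap_of_one_apply, Fintype.card_fin] at hrow₀
    exact (mul_eq_zero.mp hrow₀).resolve_left (by positivity)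
  · rintro ⟨Q₁, -, -, hQ₁diag, rfl⟩ h j j'
    simp [hQ₁diag]

/-- Proposition 2(a): with units indexed by pairs `(h, j)` (whole-plot `h`,
sub-plot `j`), let `Q` be an `N×N` (`N = H·N₀`) real symmetric positive
semidefinite matrix with all row sums zero and all diagonal entries `1/N²`.
Then `Q` has all entries within each diagonal (whole-plot) block equal to
`1/N²` — the SAP condition for the split-plot assignment mechanism — if and
only if `Q = Q₁ ⊗ (𝟙₀𝟙₀′)` for some `H×H` real symmetric positive
semidefinite matrix `Q₁` with all row sums zero and all diagonal entries
`1/N²`. -/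
theorem proposition2a {H N₀ N : ℕ} (hH : 2 ≤ H) (hN₀ : 1 ≤ N₀) (hN : N = H * N₀)
    (Q : Matrix (Fin H × Fin N₀) (Fin H × Fin N₀) ℝ) (hQ : Q.PosSemidef)
    (hrow : ∀ i, ∑ j, Q i j = 0) (hdiag : ∀ i, Q i i = 1 / (N : ℝ) ^ 2) :
    (∀ (h : Fin H) (j j' : Fin N₀), Q (h, j) (h, j') = 1 / (N : ℝ) ^ 2) ↔
    (∃ Q₁ : Matrix (Fin H) (Fin H) ℝ, Q₁.PosSemidef ∧
      (∀ h, ∑ h', Q₁ h h' = 0) ∧ (∀ h, Q₁ h h = 1 / (N : ℝ) ^ 2) ∧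
      Q = Matrix.kroneckerMap (· * ·) Q₁ (Matrix.of fun _ _ => (1 : ℝ))) :=
  proposition2a_general hN₀ Q hQ hrow hdiag
end

section
/- (Proposition 2(b)) Let H ≥ 2 and N₀ ≥ 1 with N = H·N₀. Let Q₁ be an H×H real symmetric positive semidefinite matrix with all row sums zero and all diagonal entries equal to 1/N², and set Q = Q₁ ⊗ (𝟙₀𝟙₀′), where 𝟙₀ is the N₀×1 all-ones vector. Then the largest eigenvalue of Q satisfies λ_max(Q) ≥ 1/(N(H−1)), with equality if and only if every off-diagonal entry of Q₁ equals −1/(N²(H−1)). -/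
open Finset Matrix

/-- Proposition 2(b): let `Q₁` be an `H×H` real symmetric positive
semidefinite matrix with all row sums zero and all diagonal entries `1/N²`
(`N = H·N₀`), and let `Q = Q₁ ⊗ (𝟙₀𝟙₀′)`. Then the largest eigenvalue
`λ_max(Q)` (the maximum of `τ′Qτ` over unit vectors `τ`) satisfies
`λ_max(Q) ≥ 1/(N(H−1))`, with equality if and only if every off-diagonal
entry of `Q₁` equals `−1/(N²(H−1))`. -/
theorem proposition2b {H N₀ N : ℕ} (hH : 2 ≤ H) (hN₀ : 1 ≤ N₀) (hN : N = H * N₀)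
    (Q₁ : Matrix (Fin H) (Fin H) ℝ) (hQ₁ : Q₁.PosSemidef)
    (hrow : ∀ h, ∑ h', Q₁ h h' = 0) (hdiag : ∀ h, Q₁ h h = 1 / (N : ℝ) ^ 2)
    (Q : Matrix (Fin H × Fin N₀) (Fin H × Fin N₀) ℝ)
    (hQdef : Q = Matrix.kroneckerMap (· * ·) Q₁ (Matrix.of fun _ _ => (1 : ℝ)))
    (lamMax : ℝ)
    (hlam : IsGreatest
      {r : ℝ | ∃ τ : Fin H × Fin N₀ → ℝ, ∑ i, (τ i) ^ 2 = 1 ∧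
        r = ∑ i, ∑ j, Q i j * τ i * τ j} lamMax) :
    1 / ((N : ℝ) * ((H : ℝ) - 1)) ≤ lamMax ∧
      (lamMax = 1 / ((N : ℝ) * ((H : ℝ) - 1)) ↔
        ∀ h h' : Fin H, h ≠ h' → Q₁ h h' = -1 / ((N : ℝ) ^ 2 * ((H : ℝ) - 1))) := by
  have hH2 : (2:ℝ) ≤ (H:ℝ) := by exact_mod_cast hH
  have hHpos : (0:ℝ) < (H:ℝ) := by linarith
  have hH1 : (0:ℝ) < (H:ℝ) - 1 := by linarith
  have hN0pos : (0:ℝ) < (N₀:ℝ) := by exact_mod_cast hN₀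
  have hNr : (N:ℝ) = (H:ℝ) * (N₀:ℝ) := by rw [hN]; push_cast; ring
  have hNpos : (0:ℝ) < (N:ℝ) := by rw [hNr]; positivity
  set a : ℝ := (H:ℝ) / ((N:ℝ)^2 * ((H:ℝ)-1)) with ha
  set lam : ℝ := 1 / ((N : ℝ) * ((H : ℝ) - 1)) with hlamdef
  have hapos : 0 < a := by rw [ha]; positivity
  have haN : a * (N₀:ℝ) = lam := by
    rw [ha, hlamdef, hNr]; field_simp
  -- symmetry and column sums
  have hsym : ∀ i j, Q₁ i j = Q₁ j i := by
    intro i j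
    have := hQ₁.1.apply i j
    simpa using this.symm
  have hcol : ∀ j, ∑ i, Q₁ i j = 0 := by
    intro j
    calc ∑ i, Q₁ i j = ∑ i, Q₁ j i := Finset.sum_congr rfl fun i _ => hsym i j
      _ = 0 := hrow j
  -- quadratic form of Q in terms of block sums
  have hform : ∀ τ : Fin H × Fin N₀ → ℝ,
      (∑ i, ∑ j, Q i j * τ i * τ j)
        = ∑ h, ∑ h', Q₁ h h' * (∑ u, τ (h,u)) * (∑ v, τ (h',v)) := by
    intro τ
    rw [hQdef]
    simp only [Fintype.sum_prod_type, kroneckerMap_apply, Matrix.of_apply, mul_one]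
    refine Finset.sum_congr rfl fun h _ => ?_
    conv_lhs => rw [Finset.sum_comm]
    refine Finset.sum_congr rfl fun h' _ => ?_
    rw [mul_assoc, Finset.sum_mul_sum, Finset.mul_sum]
    refine Finset.sum_congr rfl fun u _ => ?_
    rw [Finset.mul_sum]
    exact Finset.sum_congr rfl fun v _ => by ring
  -- the variational upper bound from hlam, rescaled
  have hub : ∀ (τ : Fin H × Fin N₀ → ℝ) (t : ℝ), 0 < t → (∑ i, τ i ^ 2 = t) →
      (∑ i, ∑ j, Q i j * τ i * τ j) ≤ lamMax * t := by
    intro τ t ht hts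
    have hst : Real.sqrt t ^ 2 = t := Real.sq_sqrt ht.le
    have hsp : Real.sqrt t ≠ 0 := by positivity
    set σ : Fin H × Fin N₀ → ℝ := fun i => τ i / Real.sqrt t with hσ
    have h1 : ∑ i, σ i ^ 2 = 1 := by
      simp only [hσ, div_pow, hst]
      rw [← Finset.sum_div, hts, div_self ht.ne']
    have key : ∀ i j, Q i j * σ i * σ j = Q i j * τ i * τ j / t := by
      intro i j
      simp only [hσ]
      rw [← hst]
      field_simp
      simp only [hst]
    have h2 : (∑ i, ∑ j, Q i j * σ i * σ j) = (∑ i, ∑ j, Q i j * τ i * τ j) / t := by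
      simp_rw [key, ← Finset.sum_div]
    have hmem : (∑ i, ∑ j, Q i j * τ i * τ j) / t ≤ lamMax :=
      hlam.2 ⟨σ, h1, h2.symm⟩
    exact (div_le_iff₀ ht).1 hmem
  -- quadratic form of Q₁ bounded via lamMax
  have hQ1ub : ∀ x : Fin H → ℝ,
      (N₀:ℝ) * (∑ h, ∑ h', Q₁ h h' * x h * x h') ≤ lamMax * ∑ h, x h ^ 2 := by
    intro x
    rcases eq_or_lt_of_le (Finset.sum_nonneg fun i (_ : i ∈ Finset.univ) => sq_nonneg (x i))
      with h0 | hpos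
    · have hx0 : ∀ h, x h = 0 := by
        intro h
        have := (Finset.sum_eq_zero_iff_of_nonneg
          (fun i (_ : i ∈ Finset.univ) => sq_nonneg (x i))).1 h0.symm h (Finset.mem_univ h)
        exact pow_eq_zero_iff two_ne_zero |>.1 this
      simp [hx0]
    · set τ : Fin H × Fin N₀ → ℝ := fun p => x p.1 with hτ
      have hts : ∑ i, τ i ^ 2 = (N₀:ℝ) * ∑ h, x h ^ 2 := by
        rw [Fintype.sum_prod_type, Finset.mul_sum]
        simp [hτ, Finset.sum_const, mul_comm]
      have hsh : ∀ h : Fin H, (∑ u : Fin N₀, τ (h,u)) = (N₀:ℝ) * x h := by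
        intro h; simp [hτ, Finset.sum_const, mul_comm]
      have hf : (∑ i, ∑ j, Q i j * τ i * τ j)
          = (N₀:ℝ)^2 * ∑ h, ∑ h', Q₁ h h' * x h * x h' := by
        rw [hform τ]
        simp_rw [hsh]
        rw [Finset.mul_sum]
        refine Finset.sum_congr rfl fun h _ => ?_
        rw [Finset.mul_sum]
        refine Finset.sum_congr rfl fun h' _ => ?_
        ring
      have hb := hub τ ((N₀:ℝ) * ∑ h, x h ^ 2) (by positivity) hts
      rw [hf] at hb
      nlinarith [hb, hN0pos]
  -- the test vectors e_{h0} - 1/H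
  have hesq : ∀ h0 : Fin H,
      ∑ h, ((if h = h0 then (1:ℝ) else 0) - 1/(H:ℝ))^2 = ((H:ℝ)-1)/(H:ℝ) := by
    intro h0
    have hterm : ∀ h : Fin H, ((if h = h0 then (1:ℝ) else 0) - 1/(H:ℝ))^2
        = (if h = h0 then 1 - 2/(H:ℝ) else 0) + 1/(H:ℝ)^2 := by
      intro h; split_ifs <;> ring
    simp_rw [hterm]
    rw [Finset.sum_add_distrib, Finset.sum_ite_eq' Finset.univ h0 (fun _ => 1 - 2/(H:ℝ))]
    simp only [Finset.mem_univ, if_true, Finset.sum_const, Finset.card_univ,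
      Fintype.card_fin, nsmul_eq_mul]
    field_simp
    ring
  have hqe : ∀ h0 : Fin H,
      ∑ h, ∑ h', Q₁ h h' * ((if h = h0 then (1:ℝ) else 0) - 1/(H:ℝ))
        * ((if h' = h0 then (1:ℝ) else 0) - 1/(H:ℝ)) = 1/(N:ℝ)^2 := by
    intro h0
    have hinner : ∀ h : Fin H,
        ∑ h', Q₁ h h' * ((if h' = h0 then (1:ℝ) else 0) - 1/(H:ℝ)) = Q₁ h h0 := by
      intro h
      have : ∀ h' : Fin H, Q₁ h h' * ((if h' = h0 then (1:ℝ) else 0) - 1/(H:ℝ))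
          = (if h' = h0 then Q₁ h h' else 0) - Q₁ h h' * (1/(H:ℝ)) := by
        intro h'; split_ifs <;> ring
      simp_rw [this]
      rw [Finset.sum_sub_distrib, Finset.sum_ite_eq' Finset.univ h0 (fun h' => Q₁ h h'),
        ← Finset.sum_mul, hrow]
      simp
    calc ∑ h, ∑ h', Q₁ h h' * ((if h = h0 then (1:ℝ) else 0) - 1/(H:ℝ))
          * ((if h' = h0 then (1:ℝ) else 0) - 1/(H:ℝ))
        = ∑ h, ((if h = h0 then (1:ℝ) else 0) - 1/(H:ℝ))
          * ∑ h', Q₁ h h' * ((if h' = h0 then (1:ℝ) else 0) - 1/(H:ℝ)) := by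
          refine Finset.sum_congr rfl fun h _ => ?_
          rw [Finset.mul_sum]
          exact Finset.sum_congr rfl fun h' _ => by ring
      _ = ∑ h, ((if h = h0 then (1:ℝ) else 0) - 1/(H:ℝ)) * Q₁ h h0 := by
          simp_rw [hinner]
      _ = 1/(N:ℝ)^2 := by
          have : ∀ h : Fin H, ((if h = h0 then (1:ℝ) else 0) - 1/(H:ℝ)) * Q₁ h h0
              = (if h = h0 then Q₁ h h0 else 0) - (1/(H:ℝ)) * Q₁ h h0 := by
            intro h; split_ifs <;> ring
          simp_rw [this]
          rw [Finset.sum_sub_distrib, Finset.sum_ite_eq' Finset.univ h0 (fun h => Q₁ h h0),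
            ← Finset.mul_sum, hcol, hdiag]
          simp
  -- lower bound
  have hlow : lam ≤ lamMax := by
    have h0 : Fin H := ⟨0, by omega⟩
    have h1 := hQ1ub (fun h => (if h = h0 then (1:ℝ) else 0) - 1/(H:ℝ))
    rw [hqe h0, hesq h0] at h1
    have hc : (0:ℝ) < ((H:ℝ)-1)/(H:ℝ) := by positivity
    have heqv : lam * (((H:ℝ)-1)/(H:ℝ)) = (N₀:ℝ) * (1/(N:ℝ)^2) := by
      rw [hlamdef, hNr]; field_simp
    have : lam * (((H:ℝ)-1)/(H:ℝ)) ≤ lamMax * (((H:ℝ)-1)/(H:ℝ)) := by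
      rw [heqv]; exact h1
    exact le_of_mul_le_mul_right this hc
  -- equality ⟸
  have hback : (∀ h h' : Fin H, h ≠ h' → Q₁ h h' = -1 / ((N : ℝ) ^ 2 * ((H : ℝ) - 1))) →
      lamMax ≤ lam := by
    intro hoff
    obtain ⟨τ, hτ1, hτf⟩ := hlam.1
    have hQ1eq : ∀ h h' : Fin H, Q₁ h h' = a * (if h = h' then 1 else 0) - a/(H:ℝ) := by
      intro h h'
      split_ifs with hh
      · subst hh; rw [hdiag, ha]; field_simp
      · rw [hoff h h' hh, ha]; field_simp; ring
    set s : Fin H → ℝ := fun h => ∑ u, τ (h,u) with hs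
    have hform2 : lamMax = a * ∑ h, s h ^ 2 - (a/(H:ℝ)) * (∑ h, s h)^2 := by
      rw [hτf, hform τ]
      have hterm : ∀ h h' : Fin H, Q₁ h h' * s h * s h'
          = (if h = h' then a * (s h * s h') else 0) - (a/(H:ℝ)) * (s h * s h') := by
        intro h h'; rw [hQ1eq h h']; split_ifs <;> ring
      calc ∑ h, ∑ h', Q₁ h h' * (∑ u, τ (h,u)) * (∑ v, τ (h',v))
          = ∑ h, ∑ h', ((if h = h' then a * (s h * s h') else 0)
              - (a/(H:ℝ)) * (s h * s h')) :=
            Finset.sum_congr rfl fun h _ => Finset.sum_congr rfl fun h' _ => hterm h h'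
        _ = ∑ h, (a * s h ^ 2 - (a/(H:ℝ)) * (s h * ∑ h', s h')) := by
            refine Finset.sum_congr rfl fun h _ => ?_
            rw [Finset.sum_sub_distrib,
              Finset.sum_ite_eq Finset.univ h (fun h' => a * (s h * s h'))]
            simp only [Finset.mem_univ, if_true, ← Finset.mul_sum]
            ring
        _ = a * ∑ h, s h ^ 2 - (a/(H:ℝ)) * (∑ h, s h)^2 := by
            rw [Finset.sum_sub_distrib, ← Finset.mul_sum, ← Finset.mul_sum, ← Finset.sum_mul, sq]
    have hss : ∑ h, s h ^ 2 ≤ (N₀:ℝ) := by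
      have hsh : ∀ h : Fin H, s h ^ 2 ≤ (N₀:ℝ) * ∑ u, τ (h,u) ^ 2 := by
        intro h
        have := sq_sum_le_card_mul_sum_sq (s := (Finset.univ : Finset (Fin N₀)))
          (f := fun u => τ (h,u))
        simpa [Finset.card_univ] using this
      calc ∑ h, s h ^ 2 ≤ ∑ h, (N₀:ℝ) * ∑ u, τ (h,u) ^ 2 :=
            Finset.sum_le_sum fun h _ => hsh h
        _ = (N₀:ℝ) * ∑ h, ∑ u, τ (h,u) ^ 2 := by rw [Finset.mul_sum]
        _ = (N₀:ℝ) := by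
            rw [show (∑ h, ∑ u, τ (h,u) ^ 2) = ∑ i : Fin H × Fin N₀, τ i ^ 2 from
              (Fintype.sum_prod_type (f := fun i : Fin H × Fin N₀ => τ i ^ 2)).symm, hτ1, mul_one]
    have : lamMax ≤ a * (N₀:ℝ) := by
      rw [hform2]
      have h1 : a * ∑ h, s h ^ 2 ≤ a * (N₀:ℝ) :=
        mul_le_mul_of_nonneg_left hss hapos.le
      have h2 : 0 ≤ (a/(H:ℝ)) * (∑ h, s h)^2 := by positivity
      linarith
    rwa [haN] at this
  -- equality ⟹
  have hfwd : lamMax = lam →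
      ∀ h h' : Fin H, h ≠ h' → Q₁ h h' = -1 / ((N : ℝ) ^ 2 * ((H : ℝ) - 1)) := by
    intro heq h h' hne
    set M : Matrix (Fin H) (Fin H) ℝ :=
      Matrix.of fun i j => a * (if i = j then 1 else 0) - Q₁ i j with hM
    have hMform : ∀ x : Fin H → ℝ, star x ⬝ᵥ M *ᵥ x
        = a * (∑ i, x i ^ 2) - ∑ i, ∑ j, Q₁ i j * x i * x j := by
      intro x
      have : star x ⬝ᵥ M *ᵥ x = ∑ i, ∑ j, x i * (M i j * x j) := by
        simp [dotProduct, Matrix.mulVec, Finset.mul_sum]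
      rw [this]
      have hterm : ∀ i j : Fin H, x i * (M i j * x j)
          = (if i = j then a * (x i * x j) else 0) - Q₁ i j * x i * x j := by
        intro i j; rw [hM]; simp only [Matrix.of_apply]; split_ifs <;> ring
      simp_rw [hterm, Finset.sum_sub_distrib]
      congr 1
      rw [Finset.mul_sum]
      refine Finset.sum_congr rfl fun i _ => ?_
      rw [Finset.sum_ite_eq Finset.univ i (fun j => a * (x i * x j))]
      simp only [Finset.mem_univ, if_true]
      ring
    have hMps : M.PosSemidef := by
      rw [Matrix.posSemidef_iff_dotProduct_mulVec]
      constructor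
      · rw [Matrix.IsHermitian, conjTranspose_eq_transpose_of_trivial]
        ext i j
        simp only [Matrix.transpose_apply, hM, Matrix.of_apply]
        rw [hsym j i]
        congr 1
        simp [eq_comm]
      · intro x
        rw [hMform x]
        have hb := hQ1ub x
        rw [heq, ← haN] at hb
        nlinarith [hb, hN0pos]
    -- apply to the test vector at h' (so that later Q₁ h h' appears)
    set xv : Fin H → ℝ := fun k => (if k = h' then (1:ℝ) else 0) - 1/(H:ℝ) with hxv
    have hzero : star xv ⬝ᵥ M *ᵥ xv = 0 := by
      rw [hMform xv]
      have e1 : ∑ i, xv i ^ 2 = ((H:ℝ)-1)/(H:ℝ) := hesq h'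
      have e2 : ∑ i, ∑ j, Q₁ i j * xv i * xv j = 1/(N:ℝ)^2 := hqe h'
      rw [e1, e2, ha]
      field_simp
      ring
    have hMx : M *ᵥ xv = 0 := (hMps.dotProduct_mulVec_zero_iff xv).1 hzero
    have hrowM : ∑ k, M h k = a := by
      have : ∀ k : Fin H, M h k = (if h = k then a else 0) - Q₁ h k := by
        intro k; rw [hM]; simp only [Matrix.of_apply]; split_ifs <;> ring
      simp_rw [this]
      rw [Finset.sum_sub_distrib, Finset.sum_ite_eq Finset.univ h (fun _ => a), hrow]
      simp
    have hMh : M h h' = a/(H:ℝ) := by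
      have h1 : (M *ᵥ xv) h = 0 := by rw [hMx]; rfl
      have h2 : (M *ᵥ xv) h = M h h' - (1/(H:ℝ)) * ∑ k, M h k := by
        simp only [Matrix.mulVec, dotProduct, hxv]
        have : ∀ k : Fin H, M h k * ((if k = h' then (1:ℝ) else 0) - 1/(H:ℝ))
            = (if k = h' then M h k else 0) - (1/(H:ℝ)) * M h k := by
          intro k; split_ifs <;> ring
        simp_rw [this]
        rw [Finset.sum_sub_distrib, Finset.sum_ite_eq' Finset.univ h' (fun k => M h k),
          ← Finset.mul_sum]
        simp
      rw [h2, hrowM] at h1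
      field_simp at h1 ⊢
      linarith
    have : a * (if h = h' then (1:ℝ) else 0) - Q₁ h h' = a/(H:ℝ) := by
      rw [← hMh, hM]; rfl
    rw [if_neg hne] at this
    have hQval : Q₁ h h' = -(a/(H:ℝ)) := by linarith
    rw [hQval, ha]
    field_simp
  exact ⟨hlow, ⟨hfwd, fun hoff => le_antisymm (hback hoff) hlow⟩⟩
end

section
/- (Neymanian decomposition) Let N ≥ 4 and let r(0), r(1) ≥ 2 be integers with r(0) + r(1) = N. Let Y_i(0), Y_i(1), i = 1,…,N, be fixed reals, τ_i = Y_i(1) − Y_i(0), Ȳ(z) = (1/N)Σ_i Y_i(z), τ̄ = (1/N)Σ_i τ_i, S(z,z) = (1/(N−1)) Σ_{i=1}^N (Y_i(z) − Ȳ(z))², and S(τ,τ) = (1/(N−1)) Σ_{i=1}^N (τ_i − τ̄)². Under the completely randomized assignment that chooses a subset S ⊆ {1,…,N} with |S| = r(1) uniformly at random (units in S receive treatment 1, the others receive treatment 0), the estimator τ̂(S) = (1/r(1)) Σ_{i∈S} Y_i(1) − (1/r(0)) Σ_{i∉S} Y_i(0) satisfies E[τ̂] = Ȳ(1) − Ȳ(0)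 and Var(τ̂) = S(0,0)/r(0) + S(1,1)/r(1) − S(τ,τ)/N. -/
/-!
With `g i = Y_i(1) / r1 + Y_i(0) / r0` the estimator is `τ̂(S) = ∑_{i ∈ S} g i - ∑_i Y_i(0) / r0`,
so its moments are those of the sample sum of a simple random sample of size `r1` drawn without
replacement. Counting the `r`-subsets that contain one, resp. two, given units gives
`E[∑_{i ∈ S} g i] = (r / N) ∑_i g i` and, for centred `g`,
`E[(∑_{i ∈ S} g i)²] = r (N - r) / (N (N - 1)) ∑_i (g i)²`. The variance formula then holds unit by
unit: for `N = r0 + r1` and centred outcomes `d_z = Y_i(z) - Ȳ(z)`,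
`r0 r1 / N (d1 / r1 + d0 / r0)² = d0² / r0 + d1² / r1 - (d1 - d0)² / N`.
-/

open Finset

/-- Expectation under the completely randomized assignment that chooses a
subset `S ⊆ {1,…,N}` of size `r1` uniformly at random. -/
noncomputable def crExpect (N r1 : ℕ) (f : Finset (Fin N) → ℝ) : ℝ :=
  (∑ S ∈ Finset.powersetCard r1 (univ : Finset (Fin N)), f S) / (N.choose r1 : ℝ)

/-- The treatment effect estimator
`τ̂(S) = (1/r1)∑_{i∈S} Y_i(1) − (1/r0)∑_{i∉S} Y_i(0)`
(units in `S` receive treatment 1, the rest receive treatment 0). -/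
noncomputable def tauHatCR {N : ℕ} (r0 r1 : ℕ) (Y0 Y1 : Fin N → ℝ)
    (S : Finset (Fin N)) : ℝ :=
  (1 / (r1 : ℝ)) * ∑ i ∈ S, Y1 i - (1 / (r0 : ℝ)) * ∑ i ∈ Sᶜ, Y0 i

namespace Finset

variable {α : Type*} [DecidableEq α] {u : Finset α} {r : ℕ}

theorem card_filter_powersetCard_mem {i : α} (hi : i ∈ u) (hr : 1 ≤ r) :
    #{S ∈ u.powersetCard r | i ∈ S} = (#u - 1).choose (r - 1) := by
  simpa using card_filter_powersetCard_subset {i} u r (by simpa) (by simpa)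

theorem card_filter_powersetCard_mem_and_mem {i j : α} (hi : i ∈ u) (hj : j ∈ u) (hij : i ≠ j)
    (hr : 2 ≤ r) :
    #{S ∈ u.powersetCard r | i ∈ S ∧ j ∈ S} = (#u - 2).choose (r - 2) := by
  have hcard : #{i, j} = 2 := card_pair hij
  have := card_filter_powersetCard_subset {i, j} u r (by simp [insert_subset_iff, hi, hj])
    (by omega)
  simpa only [hcard, insert_subset_iff, singleton_subset_iff] using this

theorem sum_sum_mem_comm {M : Type*} [AddCommMonoid M] {𝒮 : Finset (Finset α)}
    (h𝒮 : ∀ S ∈ 𝒮, S ⊆ u) (F : Finset α → α → M) :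
    ∑ S ∈ 𝒮, ∑ i ∈ S, F S i = ∑ i ∈ u, ∑ S ∈ 𝒮 with i ∈ S, F S i := by
  refine sum_comm' fun S i => ?_
  simp only [mem_filter]
  exact ⟨fun ⟨hS, hi⟩ => ⟨⟨hS, hi⟩, h𝒮 S hS hi⟩, fun ⟨h, _⟩ => h⟩

theorem sum_sum_mem_eq_sum_card_nsmul {M : Type*} [AddCommMonoid M] {𝒮 : Finset (Finset α)}
    (h𝒮 : ∀ S ∈ 𝒮, S ⊆ u) (f : α → M) :
    ∑ S ∈ 𝒮, ∑ i ∈ S, f i = ∑ i ∈ u, #{S ∈ 𝒮 | i ∈ S} • f i := by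
  simp only [sum_sum_mem_comm h𝒮, sum_const]

theorem sum_powersetCard_sum_mem {M : Type*} [AddCommMonoid M] (hr : 1 ≤ r) (f : α → M) :
    ∑ S ∈ u.powersetCard r, ∑ i ∈ S, f i = (#u - 1).choose (r - 1) • ∑ i ∈ u, f i := by
  rw [sum_sum_mem_eq_sum_card_nsmul (fun S hS => (mem_powersetCard.1 hS).1), smul_sum]
  exact sum_congr rfl fun i hi => by rw [card_filter_powersetCard_mem hi hr]

theorem sum_powersetCard_sq_sum_mem {R : Type*} [CommRing R] (hr : 2 ≤ r) (f : α → R) :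
    ∑ S ∈ u.powersetCard r, (∑ i ∈ S, f i) ^ 2 =
      (#u - 1).choose (r - 1) • ∑ i ∈ u, f i ^ 2 +
        (#u - 2).choose (r - 2) • ((∑ i ∈ u, f i) ^ 2 - ∑ i ∈ u, f i ^ 2) := by
  have hpair : ∀ i ∈ u, ∑ S ∈ u.powersetCard r with i ∈ S, ∑ j ∈ S, f j =
      (#u - 1).choose (r - 1) • f i + (#u - 2).choose (r - 2) • (∑ j ∈ u, f j - f i) := by
    intro i hi
    rw [sum_sum_mem_eq_sum_card_nsmul (fun S hS => (mem_powersetCard.1 (mem_filter.1 hS).1).1),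
      ← add_sum_erase u _ hi, ← sum_erase_eq_sub hi, smul_sum, filter_filter]
    simp only [and_self]
    rw [card_filter_powersetCard_mem hi (by omega)]
    congr 1
    refine sum_congr rfl fun j hj => ?_
    rw [filter_filter, card_filter_powersetCard_mem_and_mem hi (mem_of_mem_erase hj)
      (ne_of_mem_erase hj).symm hr]
  calc ∑ S ∈ u.powersetCard r, (∑ i ∈ S, f i) ^ 2
      = ∑ S ∈ u.powersetCard r, ∑ i ∈ S, f i * ∑ j ∈ S, f j := by
        simp only [sq, sum_mul]
    _ = ∑ i ∈ u, f i * ∑ S ∈ u.powersetCard r with i ∈ S, ∑ j ∈ S, f j := by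
        simp only [sum_sum_mem_comm (fun S hS => (mem_powersetCard.1 hS).1), mul_sum]
    _ = _ := by
        rw [sum_congr rfl fun i hi => congrArg (f i * ·) (hpair i hi)]
        simp only [mul_add, mul_smul_comm, mul_sub, sum_add_distrib, sum_sub_distrib, ← smul_sum,
          ← sum_mul, sq]

end Finset

section CompletelyRandomized

variable {N r : ℕ}

theorem crExpect_congr {f g : Finset (Fin N) → ℝ}
    (h : ∀ S ∈ powersetCard r (univ : Finset (Fin N)), f S = g S) :
    crExpect N r f = crExpect N r g := by
  rw [crExpect, crExpect, sum_congr rfl h]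

theorem crExpect_sub (f g : Finset (Fin N) → ℝ) :
    crExpect N r (fun S => f S - g S) = crExpect N r f - crExpect N r g := by
  simp only [crExpect, sum_sub_distrib, sub_div]

theorem crExpect_const (hrN : r ≤ N) (c : ℝ) : crExpect N r (fun _ => c) = c := by
  have hC : (N.choose r : ℝ) ≠ 0 := Nat.cast_ne_zero.2 (Nat.choose_ne_zero hrN)
  rw [crExpect, sum_const, card_powersetCard, card_univ, Fintype.card_fin, nsmul_eq_mul,
    mul_div_cancel_left₀ _ hC]

theorem cast_choose_pred_eq (hr : 1 ≤ r) (hrN : r ≤ N) :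
    ((N - 1).choose (r - 1) : ℝ) = r / N * N.choose r := by
  obtain ⟨n, rfl⟩ : ∃ n, N = n + 1 := ⟨N - 1, by omega⟩
  obtain ⟨k, rfl⟩ : ∃ k, r = k + 1 := ⟨r - 1, by omega⟩
  have h : n.choose k * (n + 1) = (k + 1) * (n + 1).choose (k + 1) := by
    rw [mul_comm, Nat.add_one_mul_choose_eq, mul_comm]
  rw [Nat.add_sub_cancel, Nat.add_sub_cancel, div_mul_eq_mul_div, eq_div_iff (by positivity)]
  exact_mod_cast h

theorem crExpect_sum_mem (hr : 1 ≤ r) (hrN : r ≤ N) (f : Fin N → ℝ) :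
    crExpect N r (fun S => ∑ i ∈ S, f i) = r / N * ∑ i, f i := by
  have hC : (N.choose r : ℝ) ≠ 0 := Nat.cast_ne_zero.2 (Nat.choose_ne_zero hrN)
  rw [crExpect, sum_powersetCard_sum_mem hr, nsmul_eq_mul, card_univ, Fintype.card_fin,
    cast_choose_pred_eq hr hrN]
  field_simp

theorem crExpect_sq_sum_mem_of_sum_eq_zero (hr : 2 ≤ r) (hrN : r ≤ N) {f : Fin N → ℝ}
    (hf : ∑ i, f i = 0) :
    crExpect N r (fun S => (∑ i ∈ S, f i) ^ 2) = r * (N - r) / (N * (N - 1)) * ∑ i, f i ^ 2 := by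
  have hC : (N.choose r : ℝ) ≠ 0 := Nat.cast_ne_zero.2 (Nat.choose_ne_zero hrN)
  have hC1 := cast_choose_pred_eq (by omega) hrN
  have hC2 := cast_choose_pred_eq (N := N - 1) (r := r - 1) (by omega) (by omega)
  rw [Nat.sub_sub, Nat.sub_sub, Nat.cast_sub (by omega), Nat.cast_sub (by omega), Nat.cast_one,
    hC1] at hC2
  have hN : (N : ℝ) - 1 ≠ 0 := by
    rw [sub_ne_zero]; exact_mod_cast (by omega : N ≠ 1)
  rw [crExpect, sum_powersetCard_sq_sum_mem hr, nsmul_eq_mul, nsmul_eq_mul, card_univ,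
    Fintype.card_fin, hf, hC1, hC2]
  field_simp
  ring

end CompletelyRandomized

theorem mul_sub_div_mul_add_div_sq {N r0 r1 : ℝ} (hr0 : r0 ≠ 0) (hr1 : r1 ≠ 0) (hN0 : N ≠ 0)
    (hN : N = r0 + r1) (d0 d1 : ℝ) :
    r1 * (N - r1) / N * (d1 / r1 + d0 / r0) ^ 2 =
      d0 ^ 2 / r0 + d1 ^ 2 / r1 - (d1 - d0) ^ 2 / N := by
  subst hN
  field_simp
  ring

theorem sum_sub_sum_div_card_eq_zero {N : ℕ} (hN : (N : ℝ) ≠ 0) (f : Fin N → ℝ) :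
    ∑ i, (f i - (∑ j, f j) / N) = 0 := by
  rw [sum_sub_distrib, sum_const, card_univ, Fintype.card_fin, nsmul_eq_mul, mul_div_cancel₀ _ hN,
    sub_self]

section Estimator

variable {N r0 r1 : ℕ} (Y0 Y1 : Fin N → ℝ)

theorem tauHatCR_eq_sum_sub (S : Finset (Fin N)) :
    tauHatCR r0 r1 Y0 Y1 S = ∑ i ∈ S, (Y1 i / r1 + Y0 i / r0) - (∑ i, Y0 i) / r0 := by
  rw [tauHatCR, ← sum_compl_add_sum S Y0, sum_add_distrib, ← sum_div, ← sum_div]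
  ring

theorem crExpect_tauHatCR (hr0 : r0 ≠ 0) (hr1 : 1 ≤ r1) (hsum : r0 + r1 = N) :
    crExpect N r1 (tauHatCR r0 r1 Y0 Y1) = (∑ i, Y1 i) / N - (∑ i, Y0 i) / N := by
  have hN : (N : ℝ) = r0 + r1 := by exact_mod_cast hsum.symm
  have hr0' : (r0 : ℝ) ≠ 0 := Nat.cast_ne_zero.2 hr0
  rw [funext (tauHatCR_eq_sum_sub Y0 Y1), crExpect_sub, crExpect_sum_mem hr1 (by omega),
    crExpect_const (by omega), sum_add_distrib, ← sum_div, ← sum_div, hN]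
  field_simp
  ring

theorem tauHatCR_sub_eq_sum_centred (hr0 : r0 ≠ 0) (hr1 : r1 ≠ 0) (hsum : r0 + r1 = N)
    {S : Finset (Fin N)} (hS : #S = r1) :
    tauHatCR r0 r1 Y0 Y1 S - ((∑ i, Y1 i) / N - (∑ i, Y0 i) / N) =
      ∑ i ∈ S, ((Y1 i - (∑ j, Y1 j) / N) / r1 + (Y0 i - (∑ j, Y0 j) / N) / r0) := by
  have hN : (N : ℝ) = r0 + r1 := by exact_mod_cast hsum.symm
  have hr0' : (r0 : ℝ) ≠ 0 := Nat.cast_ne_zero.2 hr0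
  have hr1' : (r1 : ℝ) ≠ 0 := Nat.cast_ne_zero.2 hr1
  simp only [tauHatCR_eq_sum_sub, sum_add_distrib, sum_sub_distrib, ← sum_div, sum_const, hS,
    nsmul_eq_mul]
  rw [hN]
  field_simp
  ring

theorem crExpect_sq_tauHatCR_sub (hr0 : r0 ≠ 0) (hr1 : 2 ≤ r1) (hsum : r0 + r1 = N) :
    crExpect N r1 (fun S =>
        (tauHatCR r0 r1 Y0 Y1 S - crExpect N r1 (tauHatCR r0 r1 Y0 Y1)) ^ 2) =
      r1 * (N - r1) / (N * (N - 1)) *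
        ∑ i, ((Y1 i - (∑ j, Y1 j) / N) / r1 + (Y0 i - (∑ j, Y0 j) / N) / r0) ^ 2 := by
  have hN : (N : ℝ) ≠ 0 := Nat.cast_ne_zero.2 (by omega)
  have hcentred : ∑ i, ((Y1 i - (∑ j, Y1 j) / N) / r1 + (Y0 i - (∑ j, Y0 j) / N) / r0) = 0 := by
    rw [sum_add_distrib, ← sum_div, ← sum_div, sum_sub_sum_div_card_eq_zero hN,
      sum_sub_sum_div_card_eq_zero hN, zero_div, zero_div, add_zero]
  rw [crExpect_tauHatCR Y0 Y1 hr0 (by omega) hsum, crExpect_congr fun S hS =>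
    congrArg (· ^ 2) (tauHatCR_sub_eq_sum_centred Y0 Y1 hr0 (by omega) hsum
      (mem_powersetCard.1 hS).2)]
  exact crExpect_sq_sum_mem_of_sum_eq_zero hr1 (by omega) hcentred

end Estimator

theorem neymanian_decomposition_general {N : ℕ} (r0 r1 : ℕ)
    (hr0 : 2 ≤ r0) (hr1 : 2 ≤ r1) (hsum : r0 + r1 = N)
    (Y0 Y1 : Fin N → ℝ) :
    crExpect N r1 (tauHatCR r0 r1 Y0 Y1) =
      (∑ i, Y1 i) / N - (∑ i, Y0 i) / N ∧
    crExpect N r1 (fun S =>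
        (tauHatCR r0 r1 Y0 Y1 S - crExpect N r1 (tauHatCR r0 r1 Y0 Y1)) ^ 2) =
      (1 / ((N : ℝ) - 1)) * (∑ i, (Y0 i - (∑ j, Y0 j) / N) ^ 2) / r0
        + (1 / ((N : ℝ) - 1)) * (∑ i, (Y1 i - (∑ j, Y1 j) / N) ^ 2) / r1
        - (1 / ((N : ℝ) - 1)) *
            (∑ i, ((Y1 i - Y0 i) - (∑ j, (Y1 j - Y0 j)) / N) ^ 2) / N := by
  have hN : (N : ℝ) = r0 + r1 := by exact_mod_cast hsum.symm
  have hr0' : (r0 : ℝ) ≠ 0 := by positivity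
  have hr1' : (r1 : ℝ) ≠ 0 := by positivity
  have hN' : (N : ℝ) ≠ 0 := by rw [hN]; positivity
  refine ⟨crExpect_tauHatCR Y0 Y1 (by omega) (by omega) hsum, ?_⟩
  have hunit : ∀ i, r1 * (N - r1) / (N * (N - 1)) *
      ((Y1 i - (∑ j, Y1 j) / N) / r1 + (Y0 i - (∑ j, Y0 j) / N) / r0) ^ 2 =
        1 / ((N : ℝ) - 1) * (Y0 i - (∑ j, Y0 j) / N) ^ 2 / r0
          + 1 / ((N : ℝ) - 1) * (Y1 i - (∑ j, Y1 j) / N) ^ 2 / r1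
          - 1 / ((N : ℝ) - 1) * ((Y1 i - Y0 i) - (∑ j, (Y1 j - Y0 j)) / N) ^ 2 / N := by
    intro i
    rw [sum_sub_distrib, ← div_div]
    linear_combination (1 / ((N : ℝ) - 1)) *
      mul_sub_div_mul_add_div_sq hr0' hr1' hN' hN (Y0 i - (∑ j, Y0 j) / N) (Y1 i - (∑ j, Y1 j) / N)
  rw [crExpect_sq_tauHatCR_sub Y0 Y1 (by omega) hr1 hsum, mul_sum, sum_congr rfl fun i _ => hunit i,
    sum_sub_distrib, sum_add_distrib, ← sum_div, ← sum_div, ← sum_div, ← mul_sum, ← mul_sum,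
    ← mul_sum]

/-- Neymanian decomposition: under completely randomized assignment of `r1`
units to treatment 1 and `r0 = N − r1` units to treatment 0, the estimator
`τ̂` is unbiased for `Ȳ(1) − Ȳ(0)` and its sampling variance is
`S(0,0)/r0 + S(1,1)/r1 − S(τ,τ)/N`. -/
theorem neymanian_decomposition {N : ℕ} (hN : 4 ≤ N) (r0 r1 : ℕ)
    (hr0 : 2 ≤ r0) (hr1 : 2 ≤ r1) (hsum : r0 + r1 = N)
    (Y0 Y1 : Fin N → ℝ) :
    crExpect N r1 (tauHatCR r0 r1 Y0 Y1) =
      (∑ i, Y1 i) / N - (∑ i, Y0 i) / N ∧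
    crExpect N r1 (fun S =>
        (tauHatCR r0 r1 Y0 Y1 S - crExpect N r1 (tauHatCR r0 r1 Y0 Y1)) ^ 2) =
      (1 / ((N : ℝ) - 1)) * (∑ i, (Y0 i - (∑ j, Y0 j) / N) ^ 2) / r0
        + (1 / ((N : ℝ) - 1)) * (∑ i, (Y1 i - (∑ j, Y1 j) / N) ^ 2) / r1
        - (1 / ((N : ℝ) - 1)) *
            (∑ i, ((Y1 i - Y0 i) - (∑ j, (Y1 j - Y0 j)) / N) ^ 2) / N :=
  neymanian_decomposition_general r0 r1 hr0 hr1 hsum Y0 Y1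
end
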